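/- Let X be a Banach space with the metric lifting property, Y an arbitrary Banach space, and T : X → Y a bounded linear operator. Then for every n ∈ ℕ, αₙ(T) = δₙ(T). -/

import Mathlib

open NormedSpace Metric Filter Topology
open scoped ENNReal Pointwise

/-- The `n`-th approximation number: `αₙ(T) = inf {‖T - A‖ : rank A ≤ n}`. -/
noncomputable def approxNumber {X Y : Type*} [NormedAddCommGroup X] [NormedSpace ℝ X]
    [NormedAddCommGroup Y] [NormedSpace ℝ Y] (n : ℕ) (T : X →L[ℝ] Y) : ℝ :=
  sInf {c : ℝ | ∃ A : X →L[ℝ] Y, FiniteDimensional ℝ (LinearMap.range (A : X →ₗ[ℝ] Y)) ∧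
    Module.finrank ℝ (LinearMap.range (A : X →ₗ[ℝ] Y)) ≤ n ∧ c = ‖T - A‖}

/-- The canonical quotient map `Z → Z ⧸ G` as a continuous linear map. -/
noncomputable def quotCLM {Z : Type*} [NormedAddCommGroup Z] [NormedSpace ℝ Z]
    (G : Submodule ℝ Z) : Z →L[ℝ] Z ⧸ G :=
  ⟨G.mkQ, continuous_quot_mk⟩

/-- The `n`-th Kolmogorov number: `δₙ(T) = inf {‖Q_G ∘ T‖ : G ⊆ Y, dim G ≤ n}`. -/
noncomputable def kolmogorovNumber {X Y : Type*} [NormedAddCommGroup X] [NormedSpace ℝ X]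
    [NormedAddCommGroup Y] [NormedSpace ℝ Y] (n : ℕ) (T : X →L[ℝ] Y) : ℝ :=
  sInf {c : ℝ | ∃ G : Submodule ℝ Y, FiniteDimensional ℝ G ∧
    Module.finrank ℝ G ≤ n ∧ c = ‖(quotCLM G).comp T‖}

/-- `X` has the metric lifting property: every operator into a quotient `Z ⧸ F` lifts,
with norm inflated by at most `1 + ε`. -/
def MetricLiftingProperty (X : Type u) [NormedAddCommGroup X] [NormedSpace ℝ X] : Prop :=
  ∀ (Z : Type u) [NormedAddCommGroup Z] [NormedSpace ℝ Z] [CompleteSpace Z]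
    (F : Submodule ℝ Z), IsClosed (F : Set Z) →
    ∀ (T : X →L[ℝ] Z ⧸ F) (ε : ℝ), 0 < ε →
      ∃ S : X →L[ℝ] Z, (quotCLM F).comp S = T ∧ ‖S‖ ≤ (1 + ε) * ‖T‖

/-! Given `G` with `dim G ≤ n`, lift `Q_G ∘ T : X → Y ⧸ G` to `S : X → Y` with
`‖S‖ ≤ (1 + ε) ‖Q_G ∘ T‖`; then `A = T - S` takes values in `G`, so `αₙ(T) ≤ ‖T - A‖ = ‖S‖`.
Conversely `δₙ(T) ≤ ‖Q_{range A} ∘ T‖ ≤ ‖T - A‖` for every operator.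

The lifting property only quantifies over spaces in the universe of `X`, so the lift is taken in
a copy, shrunk to that universe, of the closure of `range T + G` inside `Y`: this space is small
because `X` is and `G` is finite-dimensional, and it computes the quotient norm of `Y ⧸ G`
on its own elements. -/

universe u v

theorem small_closure {α : Type v} [TopologicalSpace α] [FrechetUrysohnSpace α] [T2Space α]
    (s : Set α) [Small.{u} s] : Small.{u} (closure s) := by
  cases isEmpty_or_nonempty α
  · infer_instance
  refine small_subset (s := Set.range fun f : ℕ → s ↦ limUnder atTop fun n ↦ (f n : α)) ?_
  intro x hx
  obtain ⟨f, hfs, hfx⟩ := mem_closure_iff_seq_limit.mp hx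
  exact ⟨fun n ↦ ⟨f n, hfs n⟩, hfx.limUnder_eq⟩

theorem le_of_forall_pos_le_one_add_mul {a c : ℝ} (h : ∀ ε > 0, a ≤ (1 + ε) * c) : a ≤ c := by
  have hlim : Tendsto (fun ε : ℝ ↦ (1 + ε) * c) (𝓝[>] 0) (𝓝 c) :=
    tendsto_nhdsWithin_of_tendsto_nhds <|
      ((continuous_const.add continuous_id).mul continuous_const).tendsto' 0 c (by simp)
  exact ge_of_tendsto hlim (eventually_nhdsWithin_of_forall h)

section Quotient

variable {X Y : Type*} [NormedAddCommGroup X] [NormedSpace ℝ X]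
  [NormedAddCommGroup Y] [NormedSpace ℝ Y]

@[simp]
theorem quotCLM_apply (G : Submodule ℝ Y) (y : Y) : quotCLM G y = Submodule.Quotient.mk y :=
  rfl

theorem quotCLM_comp_eq_iff (G : Submodule ℝ Y) (S T : X →L[ℝ] Y) :
    (quotCLM G).comp S = (quotCLM G).comp T ↔
      LinearMap.range ((S - T : X →L[ℝ] Y) : X →ₗ[ℝ] Y) ≤ G := by
  simp [ContinuousLinearMap.ext_iff, LinearMap.range_le_iff_comap, SetLike.ext_iff,
    Submodule.Quotient.eq]

theorem norm_quotCLM_comp_le (G : Submodule ℝ Y) (T : X →L[ℝ] Y) :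
    ‖(quotCLM G).comp T‖ ≤ ‖T‖ :=
  ((quotCLM G).comp T).opNorm_le_bound (norm_nonneg T) fun x ↦
    (Submodule.Quotient.norm_mk_le G (T x)).trans (T.le_opNorm x)

theorem norm_mk_ker_le_of_isometry (J : X →ₗᵢ[ℝ] Y) {G : Submodule ℝ Y}
    (hG : G ≤ LinearMap.range J.toLinearMap) (x : X) :
    ‖(Submodule.Quotient.mk x :
        X ⧸ LinearMap.ker ((quotCLM G).comp J.toContinuousLinearMap : X →ₗ[ℝ] Y ⧸ G))‖ ≤
      ‖quotCLM G (J x)‖ := by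
  set K := LinearMap.ker ((quotCLM G).comp J.toContinuousLinearMap : X →ₗ[ℝ] Y ⧸ G)
  have hGK : (G : Set Y) ⊆ J '' K := by
    intro g hg
    obtain ⟨w, rfl⟩ := hG hg
    exact ⟨w, by simpa [K] using hg, rfl⟩
  calc ‖(Submodule.Quotient.mk x : X ⧸ K)‖
      = infDist x K := QuotientAddGroup.norm_mk (S := K.toAddSubgroup) x
    _ = infDist (J x) (J '' K) := (infDist_image J.isometry).symm
    _ ≤ infDist (J x) G := infDist_le_infDist_of_subset hGK ⟨0, G.zero_mem⟩
    _ = ‖quotCLM G (J x)‖ := (QuotientAddGroup.norm_mk (S := G.toAddSubgroup) (J x)).symm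

end Quotient

section Numbers

variable {X Y : Type*} [NormedAddCommGroup X] [NormedSpace ℝ X]
  [NormedAddCommGroup Y] [NormedSpace ℝ Y]

theorem approxNumber_le {n : ℕ} (T A : X →L[ℝ] Y)
    [FiniteDimensional ℝ (LinearMap.range (A : X →ₗ[ℝ] Y))]
    (hA : Module.finrank ℝ (LinearMap.range (A : X →ₗ[ℝ] Y)) ≤ n) :
    approxNumber n T ≤ ‖T - A‖ :=
  csInf_le ⟨0, by rintro _ ⟨A, -, -, rfl⟩; exact norm_nonneg _⟩ ⟨A, ‹_›, hA, rfl⟩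

theorem le_approxNumber {n : ℕ} {T : X →L[ℝ] Y} {c : ℝ}
    (h : ∀ A : X →L[ℝ] Y, FiniteDimensional ℝ (LinearMap.range (A : X →ₗ[ℝ] Y)) →
      Module.finrank ℝ (LinearMap.range (A : X →ₗ[ℝ] Y)) ≤ n → c ≤ ‖T - A‖) :
    c ≤ approxNumber n T := by
  have hzero : LinearMap.range ((0 : X →L[ℝ] Y) : X →ₗ[ℝ] Y) = ⊥ := by
    rw [ContinuousLinearMap.toLinearMap_zero, LinearMap.range_zero]
  refine le_csInf ⟨_, 0, hzero ▸ inferInstance, by rw [hzero, finrank_bot]; exact n.zero_le, rfl⟩ ?_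
  rintro _ ⟨A, hA, hn, rfl⟩
  exact h A hA hn

theorem kolmogorovNumber_le {n : ℕ} (T : X →L[ℝ] Y) (G : Submodule ℝ Y) [FiniteDimensional ℝ G]
    (hG : Module.finrank ℝ G ≤ n) : kolmogorovNumber n T ≤ ‖(quotCLM G).comp T‖ :=
  csInf_le ⟨0, by rintro _ ⟨G, -, -, rfl⟩; exact norm_nonneg ((quotCLM G).comp T)⟩
    ⟨G, ‹_›, hG, rfl⟩

theorem le_kolmogorovNumber {n : ℕ} {T : X →L[ℝ] Y} {c : ℝ}
    (h : ∀ G : Submodule ℝ Y, FiniteDimensional ℝ G → Module.finrank ℝ G ≤ n →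
      c ≤ ‖(quotCLM G).comp T‖) :
    c ≤ kolmogorovNumber n T := by
  refine le_csInf ⟨_, ⊥, inferInstance, by simp, rfl⟩ ?_
  rintro _ ⟨G, hG, hn, rfl⟩
  exact h G hG hn

theorem kolmogorovNumber_le_approxNumber (n : ℕ) (T : X →L[ℝ] Y) :
    kolmogorovNumber n T ≤ approxNumber n T := by
  refine le_approxNumber fun A _ hn ↦ (kolmogorovNumber_le T _ hn).trans ?_
  have hTA : (quotCLM (LinearMap.range (A : X →ₗ[ℝ] Y))).comp T =
      (quotCLM (LinearMap.range (A : X →ₗ[ℝ] Y))).comp (T - A) := by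
    rw [quotCLM_comp_eq_iff, sub_sub_cancel]
  exact hTA ▸ norm_quotCLM_comp_le _ _

end Numbers

namespace MetricLiftingProperty

variable {X : Type u} {Y : Type v} [NormedAddCommGroup X] [NormedSpace ℝ X]
  [NormedAddCommGroup Y] [NormedSpace ℝ Y]

theorem exists_lift_of_isometry {Z : Type u} [NormedAddCommGroup Z] [NormedSpace ℝ Z]
    [CompleteSpace Z] (hX : MetricLiftingProperty X) (J : Z →ₗᵢ[ℝ] Y) {G : Submodule ℝ Y}
    [IsClosed (G : Set Y)] (hG : G ≤ LinearMap.range J.toLinearMap) (T : X →L[ℝ] Z) {ε : ℝ}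
    (hε : 0 < ε) :
    ∃ S : X →L[ℝ] Y, (quotCLM G).comp S = (quotCLM G).comp (J.toContinuousLinearMap.comp T) ∧
      ‖S‖ ≤ (1 + ε) * ‖(quotCLM G).comp (J.toContinuousLinearMap.comp T)‖ := by
  set κ := (quotCLM G).comp J.toContinuousLinearMap
  have hκT : ‖(quotCLM (LinearMap.ker (κ : Z →ₗ[ℝ] Y ⧸ G))).comp T‖ ≤ ‖κ.comp T‖ :=
    ((quotCLM _).comp T).opNorm_le_bound (norm_nonneg (κ.comp T)) fun x ↦
      (norm_mk_ker_le_of_isometry J hG (T x)).trans ((κ.comp T).le_opNorm x)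
  obtain ⟨S, hST, hS⟩ := hX Z (LinearMap.ker (κ : Z →ₗ[ℝ] Y ⧸ G)) κ.isClosed_ker _ ε hε
  refine ⟨J.toContinuousLinearMap.comp S, ?_, ?_⟩
  · rw [quotCLM_comp_eq_iff] at hST
    ext x
    simpa [κ, sub_eq_zero] using hST ⟨x, rfl⟩
  · rw [J.norm_toContinuousLinearMap_comp, ← ContinuousLinearMap.comp_assoc]
    exact hS.trans (by gcongr)

theorem exists_lift_comp_quotCLM [CompleteSpace Y] (hX : MetricLiftingProperty X)
    (T : X →L[ℝ] Y) (G : Submodule ℝ Y) [IsClosed (G : Set Y)] [Small.{u} G] {ε : ℝ}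
    (hε : 0 < ε) :
    ∃ S : X →L[ℝ] Y, (quotCLM G).comp S = (quotCLM G).comp T ∧
      ‖S‖ ≤ (1 + ε) * ‖(quotCLM G).comp T‖ := by
  set V := LinearMap.range (T : X →ₗ[ℝ] Y) ⊔ G
  set W := V.topologicalClosure
  have hTW (x : X) : T x ∈ W := V.le_topologicalClosure (Submodule.mem_sup_left ⟨x, rfl⟩)
  have : Small.{u} (LinearMap.range (T : X →ₗ[ℝ] Y)) := small_range T
  have : Small.{u} V := inferInstance
  have : Small.{u} W := small_closure (V : Set Y)
  have : CompleteSpace W := V.isClosed_topologicalClosure.completeSpace_coe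
  let e : Shrink.{u} W ≃ₗᵢ[ℝ] W := { Shrink.linearEquiv ℝ W with norm_map' := fun _ ↦ rfl }
  have : CompleteSpace (Shrink.{u} W) := e.toIsometryEquiv.completeSpace
  let J : Shrink.{u} W →ₗᵢ[ℝ] Y := W.subtypeₗᵢ.comp e.toLinearIsometry
  have hGJ : G ≤ LinearMap.range J.toLinearMap := fun g hg ↦
    ⟨e.symm ⟨g, V.le_topologicalClosure (Submodule.mem_sup_right hg)⟩, by simp [J]⟩
  have hJT : J.toContinuousLinearMap.comp
      ((e.symm : W →L[ℝ] Shrink.{u} W).comp (T.codRestrict W hTW)) = T := by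
    ext x; simp [J]
  obtain ⟨S, hST, hS⟩ := hX.exists_lift_of_isometry J hGJ _ hε
  rw [hJT] at hST hS
  exact ⟨S, hST, hS⟩

theorem approxNumber_le_kolmogorovNumber [CompleteSpace Y] (hX : MetricLiftingProperty X)
    (n : ℕ) (T : X →L[ℝ] Y) : approxNumber n T ≤ kolmogorovNumber n T := by
  refine le_kolmogorovNumber fun G _ hn ↦ le_of_forall_pos_le_one_add_mul fun ε hε ↦ ?_
  have : IsClosed (G : Set Y) := G.closed_of_finiteDimensional
  have : Small.{u} G := Module.Finite.small.{u} ℝ G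
  obtain ⟨S, hST, hS⟩ := hX.exists_lift_comp_quotCLM T G hε
  have hrange : LinearMap.range ((T - S : X →L[ℝ] Y) : X →ₗ[ℝ] Y) ≤ G :=
    (quotCLM_comp_eq_iff G T S).1 hST.symm
  have : FiniteDimensional ℝ (LinearMap.range ((T - S : X →L[ℝ] Y) : X →ₗ[ℝ] Y)) :=
    Submodule.finiteDimensional_of_le hrange
  calc approxNumber n T ≤ ‖T - (T - S)‖ :=
        approxNumber_le T (T - S) ((Submodule.finrank_mono hrange).trans hn)
    _ = ‖S‖ := by rw [sub_sub_cancel]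
    _ ≤ (1 + ε) * ‖(quotCLM G).comp T‖ := hS

end MetricLiftingProperty

variable {X Y : Type*} [NormedAddCommGroup X] [NormedSpace ℝ X] [CompleteSpace X]
  [NormedAddCommGroup Y] [NormedSpace ℝ Y] [CompleteSpace Y]

/-- If `X` has the metric lifting property, then `αₙ(T) = δₙ(T)` for every operator
`T : X → Y` into an arbitrary Banach space `Y`. -/
theorem approxNumber_eq_kolmogorovNumber (hX : MetricLiftingProperty X)
    (T : X →L[ℝ] Y) (n : ℕ) :
    approxNumber n T = kolmogorovNumber n T :=
  le_antisymm (hX.approxNumber_le_kolmogorovNumber n T) (kolmogorovNumber_le_approxNumber n T)
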